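/- Let h : ℝ^d → ℝ satisfy ‖h‖_{0,β,p,q} = sup_x |exp(β‖x‖_p^q) h(x)| < ∞ for some β > 0, 1 ≤ p ≤ ∞, 1 ≤ q < ∞. Then for any a ≥ β^{−1/q}, |∫_{ℝ^d ∖ [−a,a]^d} h(x) dx| ≤ (2^d d / (β^{d/q} q)) · ⌈d/q⌉! · ‖h‖_{0,β,p,q} · (βa^q)^{d/q − 1} · exp(−βa^q). -/

import Mathlib

/-!
Since `‖x‖_∞ ≤ ‖x‖_p`, the hypothesis gives `|h x| ≤ Cn e^(-β ‖x‖_∞^q)`, and the complement of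
the cube is `{‖x‖_∞ > a}`. Integrating this radial bound in polar coordinates for the sup norm
(whose unit ball has volume `2^d`) leaves `2^d d ∫_a^∞ r^(d-1) e^(-β r^q) dr`, and the substitution
`t = β r^q` turns this into `2^d d Γ(d/q, β a^q) / (q β^(d/q))`. Finally, for `z ≥ 1` and `s ≤ n`
we have `Γ(s, z) ≤ n! z^(s-1) e^(-z)`, by induction along
`Γ(s, z) = z^(s-1) e^(-z) + (s - 1) Γ(s - 1, z)`, each step costing a factor `n` because
`z^(s-2) ≤ z^(s-1)`; take `n = ⌈d/q⌉`, which needs `β a^q ≥ 1`.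
-/

open scoped ENNReal
open MeasureTheory

/-- The `ℓ_p` norm on `ℝ^d`, `1 ≤ p ≤ ∞`, via the `PiLp` norm. -/
noncomputable def pnorm (d : ℕ) (p : ℝ≥0∞) (x : Fin d → ℝ) : ℝ :=
  ‖(WithLp.equiv p (Fin d → ℝ)).symm x‖

open scoped Nat Topology
open Set Filter Real Asymptotics Metric Module

noncomputable def upperIncompleteGamma (s z : ℝ) : ℝ :=
  ∫ t in Ioi z, t ^ (s - 1) * exp (-t)

lemma integrableOn_rpow_mul_exp_neg_Ioi (s : ℝ) {z : ℝ} (hz : 0 < z) :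
    IntegrableOn (fun t => t ^ s * exp (-t)) (Ioi z) := by
  refine integrable_of_isBigO_exp_neg one_half_pos (fun t ht => ?_) ?_
  · exact ((continuousAt_rpow_const t s (Or.inl (hz.trans_le ht).ne')).mul
      (continuous_exp.comp continuous_neg).continuousAt).continuousWithinAt
  · refine ((isLittleO_rpow_exp_pos_mul_atTop s one_half_pos).isBigO.mul
      (isBigO_refl (fun t => exp (-t)) atTop)).congr_right fun t => ?_
    rw [← exp_add]
    congr 1
    ring

lemma upperIncompleteGamma_eq_add {z : ℝ} (hz : 0 < z) (s : ℝ) :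
    upperIncompleteGamma s z =
      z ^ (s - 1) * exp (-z) + (s - 1) * upperIncompleteGamma (s - 1) z := by
  have hint := integrableOn_rpow_mul_exp_neg_Ioi (s - 1) hz
  have hint' := (integrableOn_rpow_mul_exp_neg_Ioi (s - 1 - 1) hz).const_mul (s - 1)
  have hderiv : ∀ t ∈ Ici z, HasDerivAt (fun t => -(t ^ (s - 1) * exp (-t)))
      (t ^ (s - 1) * exp (-t) - (s - 1) * (t ^ (s - 1 - 1) * exp (-t))) t := fun t ht => by
    refine ((hasDerivAt_rpow_const (Or.inl (hz.trans_le ht).ne')).fun_mul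
      (hasDerivAt_neg t).exp).fun_neg.congr_deriv ?_
    ring
  have hlim : Tendsto (fun t => -(t ^ (s - 1) * exp (-t))) atTop (𝓝 0) := by
    simpa using (tendsto_rpow_mul_exp_neg_mul_atTop_nhds_zero (s - 1) 1 one_pos).neg
  have := integral_Ioi_of_hasDerivAt_of_tendsto' hderiv (hint.sub hint') hlim
  rw [integral_sub hint hint', integral_const_mul] at this
  unfold upperIncompleteGamma
  linarith

lemma upperIncompleteGamma_le_of_le_one {z s : ℝ} (hz : 0 < z) (hs : s ≤ 1) :
    upperIncompleteGamma s z ≤ z ^ (s - 1) * exp (-z) := by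
  have hexp : IntegrableOn (fun t => exp (-t)) (Ioi z) := by
    simpa using integrableOn_rpow_mul_exp_neg_Ioi 0 hz
  rw [← integral_exp_neg_Ioi, ← integral_const_mul]
  refine setIntegral_mono_on (integrableOn_rpow_mul_exp_neg_Ioi _ hz) (hexp.const_mul _)
    measurableSet_Ioi fun t ht => ?_
  exact mul_le_mul_of_nonneg_right (rpow_le_rpow_of_nonpos hz (le_of_lt ht) (by linarith))
    (exp_pos _).le

lemma upperIncompleteGamma_le_factorial {z : ℝ} (hz : 1 ≤ z) (n : ℕ) {s : ℝ} (hs : s ≤ n) :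
    upperIncompleteGamma s z ≤ n ! * (z ^ (s - 1) * exp (-z)) := by
  have hz0 : 0 < z := one_pos.trans_le hz
  induction n generalizing s with
  | zero => simpa using upperIncompleteGamma_le_of_le_one hz0 (by simp at hs; linarith)
  | succ n ih =>
    rcases le_or_gt s 1 with hs1 | hs1
    · refine (upperIncompleteGamma_le_of_le_one hz0 hs1).trans (le_mul_of_one_le_left ?_ ?_)
      · positivity
      · exact_mod_cast (n + 1).factorial_pos
    have hpow : z ^ (s - 1 - 1) ≤ z ^ (s - 1) := rpow_le_rpow_of_exponent_le hz (by linarith)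
    have hsn : s - 1 ≤ n := by push_cast at hs; linarith
    calc upperIncompleteGamma s z
        = z ^ (s - 1) * exp (-z) + (s - 1) * upperIncompleteGamma (s - 1) z :=
          upperIncompleteGamma_eq_add hz0 s
      _ ≤ z ^ (s - 1) * exp (-z) + n * (n ! * (z ^ (s - 1) * exp (-z))) := by
          gcongr z ^ (s - 1) * exp (-z) + ?_
          calc (s - 1) * upperIncompleteGamma (s - 1) z
              ≤ (s - 1) * (n ! * (z ^ (s - 1 - 1) * exp (-z))) := by gcongr; exact ih hsn
            _ ≤ n * (n ! * (z ^ (s - 1) * exp (-z))) := by gcongr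
      _ ≤ (n + 1)! * (z ^ (s - 1) * exp (-z)) := by
          rw [Nat.factorial_succ]; push_cast
          have : (1 : ℝ) ≤ n ! := by exact_mod_cast n.factorial_pos
          nlinarith [show (0 : ℝ) ≤ z ^ (s - 1) * exp (-z) by positivity]

lemma integral_Ioi_pow_mul_exp_neg_mul_rpow {β q a : ℝ} (hβ : 0 < β) (hq : 0 < q) (ha : 0 ≤ a)
    (n : ℕ) :
    ∫ y in Ioi a, y ^ n * exp (-(β * y ^ q)) =
      (q * β ^ ((n + 1) / q))⁻¹ * upperIncompleteGamma ((n + 1) / q) (β * a ^ q) := by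
  set s : ℝ := (n + 1) / q
  have hqs : q * s = n + 1 := mul_div_cancel₀ _ hq.ne'
  have hsubst : upperIncompleteGamma s (β * a ^ q) =
      β * ∫ y in Ioi a, (q * y ^ (q - 1)) * ((β * y ^ q) ^ (s - 1) * exp (-(β * y ^ q))) := by
    rw [upperIncompleteGamma, ← integral_comp_mul_left_Ioi' _ _ hβ, smul_eq_mul,
      ← integral_comp_rpow_Ioi_of_pos' hq (rpow_nonneg ha q), rpow_rpow_inv ha hq.ne']
    rfl
  have hintegrand : ∀ y ∈ Ioi a, (q * y ^ (q - 1)) * ((β * y ^ q) ^ (s - 1) * exp (-(β * y ^ q)))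
      = q * β ^ (s - 1) * (y ^ n * exp (-(β * y ^ q))) := fun y hy => by
    have hy : 0 < y := ha.trans_lt hy
    rw [mul_rpow hβ.le (rpow_nonneg hy.le q), ← rpow_mul hy.le, ← rpow_natCast,
      show (n : ℝ) = (q - 1) + q * (s - 1) by linear_combination -hqs, rpow_add hy]
    ring
  rw [hsubst, setIntegral_congr_fun measurableSet_Ioi hintegrand, integral_const_mul,
    rpow_sub_one hβ.ne']
  field_simp

lemma indicator_compl_closedBall_comp_norm {E F : Type*} [SeminormedAddCommGroup E] [Zero F]
    (f : ℝ → F) (r : ℝ) :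
    (closedBall (0 : E) r)ᶜ.indicator (fun x => f ‖x‖) = fun x => (Ioi r).indicator f ‖x‖ := by
  ext x
  simp [indicator]

section Radial

variable {E F : Type*} [NormedAddCommGroup E] [NormedSpace ℝ E] [Nontrivial E]
  [FiniteDimensional ℝ E] [MeasurableSpace E] [BorelSpace E] (μ : Measure E) [μ.IsAddHaarMeasure]
  [NormedAddCommGroup F] [NormedSpace ℝ F]

lemma integrableOn_compl_closedBall_fun_norm_addHaar {f : ℝ → F} {r : ℝ} (hr : 0 ≤ r) :
    IntegrableOn (fun x : E => f ‖x‖) (closedBall 0 r)ᶜ μ ↔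
      IntegrableOn (fun y => y ^ (finrank ℝ E - 1) • f y) (Ioi r) := by
  rw [← integrable_indicator_iff measurableSet_closedBall.compl,
    indicator_compl_closedBall_comp_norm, integrable_fun_norm_addHaar, ← indicator_smul,
    IntegrableOn, integrable_indicator_iff measurableSet_Ioi, IntegrableOn, IntegrableOn,
    Measure.restrict_restrict measurableSet_Ioi, Ioi_inter_Ioi, sup_eq_left.2 hr]

lemma setIntegral_compl_closedBall_fun_norm_addHaar (f : ℝ → F) {r : ℝ} (hr : 0 ≤ r) :
    ∫ x in (closedBall (0 : E) r)ᶜ, f ‖x‖ ∂μ =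
      finrank ℝ E • μ.real (ball 0 1) • ∫ y in Ioi r, y ^ (finrank ℝ E - 1) • f y := by
  rw [← integral_indicator measurableSet_closedBall.compl,
    indicator_compl_closedBall_comp_norm, integral_fun_norm_addHaar, ← indicator_smul,
    setIntegral_indicator measurableSet_Ioi, Ioi_inter_Ioi, sup_eq_right.2 hr]

end Radial

section SupNorm

variable {n : ℕ} {r : ℝ}

lemma integrableOn_compl_closedBall_fun_norm_pi {f : ℝ → ℝ} (hr : 0 ≤ r)
    (hf : IntegrableOn (fun y => y ^ n * f y) (Ioi r)) :
    IntegrableOn (fun x : Fin (n + 1) → ℝ => f ‖x‖) (closedBall 0 r)ᶜ :=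
  (integrableOn_compl_closedBall_fun_norm_addHaar volume hr).2 (by simpa using hf)

lemma setIntegral_compl_closedBall_fun_norm_pi (f : ℝ → ℝ) (hr : 0 ≤ r) :
    ∫ x in (closedBall (0 : Fin (n + 1) → ℝ) r)ᶜ, f ‖x‖ =
      (n + 1) * 2 ^ (n + 1) * ∫ y in Ioi r, y ^ n * f y := by
  rw [setIntegral_compl_closedBall_fun_norm_addHaar volume f hr, Measure.real,
    Real.volume_pi_ball _ one_pos]
  simp [mul_assoc]

lemma compl_Icc_neg_const_eq_compl_closedBall (d : ℕ) {a : ℝ} (ha : 0 ≤ a) :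
    (Icc (fun _ => -a : Fin d → ℝ) (fun _ => a))ᶜ = (closedBall 0 a)ᶜ := by
  rw [closedBall_pi _ ha, ← pi_univ_Icc]
  simp [Real.closedBall_eq_Icc]

end SupNorm

lemma norm_le_pnorm (d : ℕ) {p : ℝ≥0∞} (hp : 1 ≤ p) (x : Fin d → ℝ) : ‖x‖ ≤ pnorm d p x := by
  have : Fact (1 ≤ p) := ⟨hp⟩
  exact (pi_norm_le_iff_of_nonneg (norm_nonneg _)).2 fun i => by
    simpa using PiLp.norm_apply_le ((WithLp.equiv p (Fin d → ℝ)).symm x) i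

lemma abs_le_mul_exp_neg_of_abs_exp_mul_le {u v y c : ℝ} (huv : u ≤ v) (h : |exp v * y| ≤ c) :
    |y| ≤ c * exp (-u) :=
  calc |y| = exp (-v) * |exp v * y| := by
        rw [abs_mul, abs_of_pos (exp_pos _), ← mul_assoc, ← exp_add, neg_add_cancel, exp_zero,
          one_mul]
    _ ≤ exp (-u) * c := mul_le_mul (by gcongr) h (abs_nonneg _) (exp_pos _).le
    _ = c * exp (-u) := mul_comm _ _

lemma one_le_mul_rpow_of_rpow_neg_inv_le {β q a : ℝ} (hβ : 0 < β) (hq : 0 < q)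
    (ha : β ^ (-1 / q) ≤ a) : 1 ≤ β * a ^ q := by
  have : β⁻¹ ≤ a ^ q := calc
    β⁻¹ = (β ^ (-1 / q)) ^ q := by rw [← rpow_mul hβ.le, div_mul_cancel₀ _ hq.ne', rpow_neg_one]
    _ ≤ a ^ q := rpow_le_rpow (rpow_nonneg hβ.le _) ha hq.le
  calc 1 = β * β⁻¹ := (mul_inv_cancel₀ hβ.ne').symm
    _ ≤ β * a ^ q := by gcongr

/-- If `sup_x |exp(β‖x‖_p^q) h(x)| ≤ Cn < ∞` for some `β > 0`,
`1 ≤ p ≤ ∞`, `1 ≤ q < ∞`, then for any `a ≥ β^{−1/q}`,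
`|∫_{ℝ^d ∖ [−a,a]^d} h| ≤ (2^d d/(β^{d/q} q)) ⌈d/q⌉! Cn (βa^q)^{d/q−1} e^{−βa^q}`. -/
theorem stmt11 (d : ℕ) (β q : ℝ) (hβ : 0 < β) (hq : 1 ≤ q) (p : ℝ≥0∞) (hp : 1 ≤ p)
    (h : (Fin d → ℝ) → ℝ) (Cn : ℝ)
    (hCn : ∀ x : Fin d → ℝ, |Real.exp (β * pnorm d p x ^ q) * h x| ≤ Cn)
    (a : ℝ) (ha : β ^ (-1 / q) ≤ a) :
    |∫ x in (Set.Icc (fun _ => -a : Fin d → ℝ) (fun _ => a))ᶜ, h x| ≤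
      2 ^ d * d / (β ^ ((d : ℝ) / q) * q) * (Nat.ceil ((d : ℝ) / q)).factorial * Cn *
        (β * a ^ q) ^ ((d : ℝ) / q - 1) * Real.exp (-(β * a ^ q)) := by
  have hq0 : 0 < q := by linarith
  have ha0 : 0 < a := (rpow_pos_of_pos hβ _).trans_le ha
  have hCn0 : 0 ≤ Cn := (abs_nonneg _).trans (hCn 0)
  rcases d with _ | n
  · have : Icc (fun _ => -a : Fin 0 → ℝ) (fun _ => a) = univ :=
      eq_univ_of_forall fun _ => ⟨finZeroElim, finZeroElim⟩
    simp [this]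
  have hbound (x : Fin (n + 1) → ℝ) : ‖h x‖ ≤ Cn * exp (-(β * ‖x‖ ^ q)) :=
    abs_le_mul_exp_neg_of_abs_exp_mul_le (by gcongr; exact norm_le_pnorm _ hp x) (hCn x)
  have hint : IntegrableOn (fun x : Fin (n + 1) → ℝ => exp (-(β * ‖x‖ ^ q))) (closedBall 0 a)ᶜ :=
    integrableOn_compl_closedBall_fun_norm_pi ha0.le <| by
      simpa [neg_mul] using (integrableOn_rpow_mul_exp_neg_mul_rpow (s := n) (by linarith) hq0
        hβ).mono_set (Ioi_subset_Ioi ha0.le)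
  set s : ℝ := ((n + 1 : ℕ) : ℝ) / q
  rw [compl_Icc_neg_const_eq_compl_closedBall _ ha0.le]
  calc |∫ x in (closedBall (0 : Fin (n + 1) → ℝ) a)ᶜ, h x|
      ≤ ∫ x in (closedBall (0 : Fin (n + 1) → ℝ) a)ᶜ, Cn * exp (-(β * ‖x‖ ^ q)) :=
        norm_integral_le_of_norm_le (hint.const_mul Cn) (.of_forall hbound)
    _ = Cn * ((n + 1) * 2 ^ (n + 1) * ((q * β ^ s)⁻¹ * upperIncompleteGamma s (β * a ^ q))) := by
        rw [integral_const_mul,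
          setIntegral_compl_closedBall_fun_norm_pi (fun y => exp (-(β * y ^ q))) ha0.le,
          integral_Ioi_pow_mul_exp_neg_mul_rpow hβ hq0 ha0.le]
        simp only [s, Nat.cast_succ]
    _ ≤ Cn * ((n + 1) * 2 ^ (n + 1) *
          ((q * β ^ s)⁻¹ * (⌈s⌉₊ ! * ((β * a ^ q) ^ (s - 1) * exp (-(β * a ^ q)))))) := by
        gcongr
        exact upperIncompleteGamma_le_factorial (one_le_mul_rpow_of_rpow_neg_inv_le hβ hq0 ha) _
          (Nat.le_ceil s)
    _ = _ := by
        field_simp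
        push_cast
        ring
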